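/- The following hold: ∫₀^{1/√2} t²·(1−t²)^{−5/2} dt + ∫_{1/√2}^{1} t^{−3} dt = 5/6, and 2·(5/6)² > ∫₀^{1/√2} (1−t²)^{−3/2} dt + ∫_{1/√2}^{1} (1−t²)·t^{−5} dt. Consequently, for the radial profile ρ(t) = (1−t²)^{−1/2} on [0,1/√2] and ρ(t) = 1/t on [1/√2,1] of the six-dimensional cylinder, with r(t) = ρ(t)⁵, h(1) = ∫₀¹ r(t)(1−t²) dt and k(1) = ∫₀¹ t² r(t) dt, one has r(1) = 1, k(1) = 5/6, and 2·k(1)² > h(1)·r(1), so the cylinder fails the six-dimensional flat-top criterion 2k(1)² < h(1)r(1). -/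

import Mathlib

open Set intervalIntegral

/-- The radial profile of the six-dimensional cylinder of radius `1` and height `2`:
`ρ(t) = (1−t²)^{−1/2}` for `0 ≤ t ≤ 1/√2` and `ρ(t) = 1/t` for `1/√2 ≤ t ≤ 1`. -/
noncomputable def ρCyl (t : ℝ) : ℝ :=
  if t ≤ (Real.sqrt 2)⁻¹ then (Real.sqrt (1 - t ^ 2))⁻¹ else t⁻¹

noncomputable abbrev sC : ℝ := (Real.sqrt 2)⁻¹

lemma hs0 : (0:ℝ) < sC := by positivity
lemma hsq : sC ^ 2 = 1/2 := by
  simp [sC, inv_pow, Real.sq_sqrt]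
lemma hs1 : sC < 1 := by nlinarith [hsq, hs0]

lemma rpow_helper (x : ℝ) (hx : 0 < x) (n : ℕ) :
    x ^ (-(n:ℝ)/2) = (Real.sqrt x ^ n)⁻¹ := by
  rw [Real.sqrt_eq_rpow, ← Real.rpow_natCast (x ^ ((1:ℝ)/2)) n, ← Real.rpow_mul hx.le,
    ← Real.rpow_neg hx.le]
  ring_nf

lemma rpow_helper2 (t : ℝ) (ht : 0 < t) (n : ℕ) :
    t ^ (-(n:ℝ)) = (t ^ n)⁻¹ := by
  rw [← Real.rpow_natCast t n, ← Real.rpow_neg ht.le]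

lemma hasDeriv_sqrt (t : ℝ) (ht : 1 - t^2 > 0) :
    HasDerivAt (fun t : ℝ => Real.sqrt (1 - t^2)) (-t / Real.sqrt (1 - t^2)) t := by
  have h1 : HasDerivAt (fun t : ℝ => 1 - t^2) (-(2*t)) t := by
    simpa using ((hasDerivAt_pow 2 t).const_sub 1)
  have := (Real.hasDerivAt_sqrt (ne_of_gt ht)).comp t h1
  refine this.congr_deriv ?_
  have hS0 : (0:ℝ) < Real.sqrt (1 - t^2) := Real.sqrt_pos.mpr ht
  field_simp

lemma hasDeriv1 (t : ℝ) (ht : 1 - t^2 > 0) :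
    HasDerivAt (fun t : ℝ => t^3 / (3 * Real.sqrt (1 - t^2)^3))
      (t^2 * (Real.sqrt (1 - t^2) ^ 5)⁻¹) t := by
  have hS0 : (0:ℝ) < Real.sqrt (1 - t^2) := Real.sqrt_pos.mpr ht
  have hS2 : Real.sqrt (1 - t^2) ^ 2 = 1 - t^2 := Real.sq_sqrt ht.le
  have h := (hasDerivAt_pow 3 t).div (((hasDeriv_sqrt t ht).pow 3).const_mul 3)
    (by simp only [Pi.pow_apply]; positivity)
  refine h.congr_deriv ?_
  simp only [Pi.pow_apply]
  field_simp
  ring_nf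
  linear_combination (3*t^2*Real.sqrt (1-t^2)^2) * hS2

example : True := trivial

lemma hasDeriv3 (t : ℝ) (ht : 1 - t^2 > 0) :
    HasDerivAt (fun t : ℝ => t / Real.sqrt (1 - t^2))
      ((Real.sqrt (1 - t^2) ^ 3)⁻¹) t := by
  have hS0 : (0:ℝ) < Real.sqrt (1 - t^2) := Real.sqrt_pos.mpr ht
  have hS2 : Real.sqrt (1 - t^2) ^ 2 = 1 - t^2 := Real.sq_sqrt ht.le
  have h := (hasDerivAt_id t).div (hasDeriv_sqrt t ht) hS0.ne'
  refine h.congr_deriv ?_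
  field_simp
  simp only [id_eq]
  linear_combination hS2

lemma hasDeriv2 (t : ℝ) (ht : 0 < t) :
    HasDerivAt (fun t : ℝ => -1 / (2 * t^2)) ((t^3)⁻¹) t := by
  have h := (hasDerivAt_const t (-1:ℝ)).div ((hasDerivAt_pow 2 t).const_mul 2)
    (by positivity)
  refine h.congr_deriv ?_
  field_simp
  ring

lemma hasDeriv4 (t : ℝ) (ht : 0 < t) :
    HasDerivAt (fun t : ℝ => -1 / (4 * t^4) + 1 / (2 * t^2))
      ((1 - t^2) * (t^5)⁻¹) t := by
  have h1 := (hasDerivAt_const t (-1:ℝ)).div ((hasDerivAt_pow 4 t).const_mul 4)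
    (by positivity)
  have h2 := (hasDerivAt_const t (1:ℝ)).div ((hasDerivAt_pow 2 t).const_mul 2)
    (by positivity)
  refine (h1.add h2).congr_deriv ?_
  field_simp
  ring

-- positivity of 1 - t^2 on [0, s]
lemma one_sub_pos {t : ℝ} (ht : t ∈ uIcc (0:ℝ) sC) : 1 - t^2 > 0 := by
  rw [uIcc_of_le hs0.le] at ht
  nlinarith [ht.1, ht.2, hsq, hs1, hs0]

lemma t_pos {t : ℝ} (ht : t ∈ uIcc sC (1:ℝ)) : 0 < t := by
  rw [uIcc_of_le hs1.le] at ht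
  linarith [ht.1, hs0]

lemma int1 : ∫ t in (0:ℝ)..sC, t ^ 2 * (1 - t ^ 2) ^ (-(5:ℝ)/2) = 1/3 := by
  have hcong : ∀ t ∈ uIcc (0:ℝ) sC,
      t ^ 2 * (1 - t ^ 2) ^ (-(5:ℝ)/2) = t^2 * (Real.sqrt (1 - t^2) ^ 5)⁻¹ := by
    intro t ht
    rw [show (-(5:ℝ)/2) = (-(5:ℕ):ℝ)/2 by norm_num, rpow_helper _ (one_sub_pos ht)]
  rw [integral_congr (g := fun t => t^2 * (Real.sqrt (1 - t^2) ^ 5)⁻¹) hcong]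
  rw [integral_eq_sub_of_hasDerivAt (f := fun t => t^3 / (3 * Real.sqrt (1 - t^2)^3))
    (fun t ht => hasDeriv1 t (one_sub_pos ht))]
  · have h2 : Real.sqrt (1 - sC^2) = sC := by
      rw [hsq]; rw [show (1:ℝ) - 1/2 = 1/2 by norm_num]
      rw [show (1:ℝ)/2 = 2⁻¹ by norm_num]
      rw [show sC = (Real.sqrt 2)⁻¹ from rfl, ← Real.sqrt_inv]
    rw [h2]
    have h3 : sC ≠ 0 := hs0.ne'
    norm_num
    rw [div_eq_iff (by positivity)]
    ring
  · apply ContinuousOn.intervalIntegrable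
    apply ContinuousOn.mul (by fun_prop)
    apply ContinuousOn.inv₀ (by fun_prop)
    intro t ht
    have := one_sub_pos ht
    positivity

lemma int2 : ∫ t in sC..(1:ℝ), t ^ (-(3:ℝ)) = 1/2 := by
  have hcong : ∀ t ∈ uIcc sC (1:ℝ), t ^ (-(3:ℝ)) = (t^3)⁻¹ := by
    intro t ht
    rw [show (-(3:ℝ)) = -((3:ℕ):ℝ) by norm_num, rpow_helper2 _ (t_pos ht)]
  rw [integral_congr (g := fun t => (t^3)⁻¹) hcong]
  rw [integral_eq_sub_of_hasDerivAt (f := fun t => -1 / (2 * t^2))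
    (fun t ht => hasDeriv2 t (t_pos ht))]
  · rw [hsq]; norm_num
  · apply ContinuousOn.intervalIntegrable
    apply ContinuousOn.inv₀ (by fun_prop)
    intro t ht
    have := t_pos ht
    positivity

lemma int3 : ∫ t in (0:ℝ)..sC, (1 - t ^ 2) ^ (-(3:ℝ)/2) = 1 := by
  have hcong : ∀ t ∈ uIcc (0:ℝ) sC,
      (1 - t ^ 2) ^ (-(3:ℝ)/2) = (Real.sqrt (1 - t^2) ^ 3)⁻¹ := by
    intro t ht
    rw [show (-(3:ℝ)/2) = (-(3:ℕ):ℝ)/2 by norm_num, rpow_helper _ (one_sub_pos ht)]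
  rw [integral_congr (g := fun t => (Real.sqrt (1 - t^2) ^ 3)⁻¹) hcong]
  rw [integral_eq_sub_of_hasDerivAt (f := fun t => t / Real.sqrt (1 - t^2))
    (fun t ht => hasDeriv3 t (one_sub_pos ht))]
  · have h2 : Real.sqrt (1 - sC^2) = sC := by
      rw [hsq, show (1:ℝ) - 1/2 = 2⁻¹ by norm_num,
        show sC = (Real.sqrt 2)⁻¹ from rfl, ← Real.sqrt_inv]
    rw [h2]
    have h3 : sC ≠ 0 := hs0.ne'
    norm_num
  · apply ContinuousOn.intervalIntegrable
    apply ContinuousOn.inv₀ (by fun_prop)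
    intro t ht
    have := one_sub_pos ht
    positivity

lemma int4 : ∫ t in sC..(1:ℝ), (1 - t ^ 2) * t ^ (-(5:ℝ)) = 1/4 := by
  have hcong : ∀ t ∈ uIcc sC (1:ℝ),
      (1 - t ^ 2) * t ^ (-(5:ℝ)) = (1 - t^2) * (t^5)⁻¹ := by
    intro t ht
    rw [show (-(5:ℝ)) = -((5:ℕ):ℝ) by norm_num, rpow_helper2 _ (t_pos ht)]
  rw [integral_congr (g := fun t => (1 - t^2) * (t^5)⁻¹) hcong]
  rw [integral_eq_sub_of_hasDerivAt (f := fun t => -1 / (4 * t^4) + 1 / (2 * t^2))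
    (fun t ht => hasDeriv4 t (t_pos ht))]
  · have h4 : sC^4 = 1/4 := by rw [show sC^4 = (sC^2)^2 by ring, hsq]; norm_num
    rw [h4, hsq]; norm_num
  · apply ContinuousOn.intervalIntegrable
    apply ContinuousOn.mul (by fun_prop)
    apply ContinuousOn.inv₀ (by fun_prop)
    intro t ht
    have := t_pos ht
    positivity

lemma rho_left {t : ℝ} (ht : t ∈ uIcc (0:ℝ) sC) :
    ρCyl t ^ 5 = (Real.sqrt (1 - t^2) ^ 5)⁻¹ := by
  rw [uIcc_of_le hs0.le] at ht
  rw [ρCyl, if_pos ht.2, inv_pow]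

lemma rho_right {t : ℝ} (ht : t ∈ uIcc sC (1:ℝ)) : ρCyl t = t⁻¹ := by
  rw [uIcc_of_le hs1.le] at ht
  rw [ρCyl]
  split_ifs with h
  · have heq : t = sC := le_antisymm h ht.1
    subst heq
    rw [show (1:ℝ) - sC^2 = 2⁻¹ by rw [hsq]; norm_num, ← Real.sqrt_inv]
    simp [sC]
  · rfl

lemma hK : ∫ t in (0:ℝ)..1, t ^ 2 * ρCyl t ^ 5 = 5/6 := by
  have e1 : EqOn (fun t : ℝ => t ^ 2 * ρCyl t ^ 5)
      (fun t => t^2 * (Real.sqrt (1 - t^2) ^ 5)⁻¹) (uIcc (0:ℝ) sC) :=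
    fun t ht => by simp only [rho_left ht]
  have e2 : EqOn (fun t : ℝ => t ^ 2 * ρCyl t ^ 5)
      (fun t => (t^3)⁻¹) (uIcc sC (1:ℝ)) := by
    intro t ht
    have h0 := t_pos ht
    simp only [rho_right ht]
    field_simp
  have c1 : ContinuousOn (fun t : ℝ => t^2 * (Real.sqrt (1 - t^2) ^ 5)⁻¹) (uIcc (0:ℝ) sC) := by
    apply ContinuousOn.mul (by fun_prop)
    apply ContinuousOn.inv₀ (by fun_prop)
    intro t ht
    have := one_sub_pos ht
    positivity
  have c2 : ContinuousOn (fun t : ℝ => (t^3)⁻¹) (uIcc sC (1:ℝ)) := by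
    apply ContinuousOn.inv₀ (by fun_prop)
    intro t ht
    have := t_pos ht
    positivity
  have i1 : IntervalIntegrable (fun t : ℝ => t ^ 2 * ρCyl t ^ 5) MeasureTheory.volume 0 sC :=
    (c1.congr e1).intervalIntegrable
  have i2 : IntervalIntegrable (fun t : ℝ => t ^ 2 * ρCyl t ^ 5) MeasureTheory.volume sC 1 :=
    (c2.congr e2).intervalIntegrable
  rw [← integral_add_adjacent_intervals i1 i2, integral_congr e1, integral_congr e2]
  have h1 : ∫ t in (0:ℝ)..sC, t^2 * (Real.sqrt (1 - t^2) ^ 5)⁻¹ = 1/3 := by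
    rw [← int1]
    exact integral_congr fun t ht => by
      rw [show (-(5:ℝ)/2) = (-(5:ℕ):ℝ)/2 by norm_num, rpow_helper _ (one_sub_pos ht)]
  have h2 : ∫ t in sC..(1:ℝ), (t^3)⁻¹ = 1/2 := by
    rw [← int2]
    exact integral_congr fun t ht => by
      rw [show (-(3:ℝ)) = -((3:ℕ):ℝ) by norm_num, rpow_helper2 _ (t_pos ht)]
  rw [h1, h2]; norm_num

lemma hH : ∫ t in (0:ℝ)..1, ρCyl t ^ 5 * (1 - t ^ 2) = 5/4 := by
  have e1 : EqOn (fun t : ℝ => ρCyl t ^ 5 * (1 - t ^ 2))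
      (fun t => (Real.sqrt (1 - t^2) ^ 3)⁻¹) (uIcc (0:ℝ) sC) := by
    intro t ht
    have h0 := one_sub_pos ht
    have hS0 : (0:ℝ) < Real.sqrt (1 - t^2) := Real.sqrt_pos.mpr h0
    have hS2 : Real.sqrt (1 - t^2) ^ 2 = 1 - t^2 := Real.sq_sqrt h0.le
    simp only [rho_left ht]
    field_simp
    linear_combination (-1) * hS2
  have e2 : EqOn (fun t : ℝ => ρCyl t ^ 5 * (1 - t ^ 2))
      (fun t => (1 - t^2) * (t^5)⁻¹) (uIcc sC (1:ℝ)) := by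
    intro t ht
    have h0 := t_pos ht
    simp only [rho_right ht]
    field_simp
  have c1 : ContinuousOn (fun t : ℝ => (Real.sqrt (1 - t^2) ^ 3)⁻¹) (uIcc (0:ℝ) sC) := by
    apply ContinuousOn.inv₀ (by fun_prop)
    intro t ht
    have := one_sub_pos ht
    positivity
  have c2 : ContinuousOn (fun t : ℝ => (1 - t^2) * (t^5)⁻¹) (uIcc sC (1:ℝ)) := by
    apply ContinuousOn.mul (by fun_prop)
    apply ContinuousOn.inv₀ (by fun_prop)
    intro t ht
    have := t_pos ht
    positivity
  have i1 : IntervalIntegrable (fun t : ℝ => ρCyl t ^ 5 * (1 - t ^ 2)) MeasureTheory.volume 0 sC :=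
    (c1.congr e1).intervalIntegrable
  have i2 : IntervalIntegrable (fun t : ℝ => ρCyl t ^ 5 * (1 - t ^ 2)) MeasureTheory.volume sC 1 :=
    (c2.congr e2).intervalIntegrable
  rw [← integral_add_adjacent_intervals i1 i2, integral_congr e1, integral_congr e2]
  have h1 : ∫ t in (0:ℝ)..sC, (Real.sqrt (1 - t^2) ^ 3)⁻¹ = 1 :=
    (integral_congr (g := fun t : ℝ => (1 - t ^ 2) ^ (-(3:ℝ)/2)) fun t ht => by
      show (Real.sqrt (1 - t^2) ^ 3)⁻¹ = (1 - t ^ 2) ^ (-(3:ℝ)/2)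
      rw [show (-(3:ℝ)/2) = (-(3:ℕ):ℝ)/2 by norm_num,
        rpow_helper _ (one_sub_pos ht)]).trans int3
  have h2 : ∫ t in sC..(1:ℝ), (1 - t^2) * (t^5)⁻¹ = 1/4 := by
    rw [← int4]
    exact integral_congr fun t ht => by
      rw [show (-(5:ℝ)) = -((5:ℕ):ℝ) by norm_num, rpow_helper2 _ (t_pos ht)]
  rw [h1, h2]; norm_num

lemma rho_one : ρCyl 1 ^ 5 = 1 := by
  rw [ρCyl, if_neg (by push_neg; exact hs1)]
  norm_num
/-- **The six-dimensional cylinder fails the flat-top criterion.**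
`∫₀^{1/√2} t²(1−t²)^{−5/2} dt + ∫_{1/√2}^1 t^{−3} dt = 5/6`,
`2(5/6)² > ∫₀^{1/√2} (1−t²)^{−3/2} dt + ∫_{1/√2}^1 (1−t²)t^{−5} dt`, and hence,
with `r = ρ⁵`, `h(1) = ∫₀¹ r(t)(1−t²) dt` and `k(1) = ∫₀¹ t² r(t) dt`, one has
`r(1) = 1`, `k(1) = 5/6` and `2k(1)² > h(1)r(1)`. -/
theorem cylinder_dim6_fails_flat_top_criterion :
    ((∫ t in (0 : ℝ)..(Real.sqrt 2)⁻¹, t ^ 2 * (1 - t ^ 2) ^ (-(5 : ℝ) / 2))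
      + ∫ t in ((Real.sqrt 2)⁻¹ : ℝ)..1, t ^ (-(3 : ℝ))) = 5 / 6 ∧
    2 * ((5 : ℝ) / 6) ^ 2 >
      (∫ t in (0 : ℝ)..(Real.sqrt 2)⁻¹, (1 - t ^ 2) ^ (-(3 : ℝ) / 2))
        + ∫ t in ((Real.sqrt 2)⁻¹ : ℝ)..1, (1 - t ^ 2) * t ^ (-(5 : ℝ)) ∧
    ρCyl 1 ^ 5 = 1 ∧
    (∫ t in (0 : ℝ)..1, t ^ 2 * ρCyl t ^ 5) = 5 / 6 ∧
    2 * (∫ t in (0 : ℝ)..1, t ^ 2 * ρCyl t ^ 5) ^ 2 >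
      (∫ t in (0 : ℝ)..1, ρCyl t ^ 5 * (1 - t ^ 2)) * ρCyl 1 ^ 5 := by
  refine ⟨?_, ?_, rho_one, hK, ?_⟩
  · rw [show (-(5:ℝ)/2) = -(5:ℝ)/2 by norm_num]
    rw [int1, int2]; norm_num
  · rw [int3, int4]; norm_num
  · rw [hK, hH, rho_one]; norm_num
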